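/- Let t* be a critical point of h(t; σ) = 2(1 − e^{−t})/(2 + t²/σ²) on t > 0 with σ ≤ 1/(2√2). Then t* satisfies (t*)²·(2(e^{t*} − 1)/t* − 1) = 2σ², and consequently 0.62·√2·σ ≤ t* ≤ √2·σ. -/

import Mathlib

/-!
Clearing denominators in `h' t = 0` (the denominator `2 + t²/σ²` is positive) and multiplying by
`σ² e^t` turns the critical-point condition into `2t(e^t - 1) - t² = 2σ²`. Since `e^t - 1 ≥ t`, the
left side is at least `t²`, which gives `t ≤ √2 σ ≤ 1/2`. On `[0, 1/2]` we have
`e^t - 1 ≤ t e^t ≤ e^{1/2} t < 1.7 t`, so the left side is at most `2.4 t²`, and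
`0.62² · 2 ≤ 2 / 2.4` gives the lower bound.
-/

open Real

/-- `h t = 2(1 - e^{-t})/(2 + t²/σ²)` -/
noncomputable def h (σ t : ℝ) : ℝ := 2 * (1 - Real.exp (-t)) / (2 + t^2 / σ^2)

lemma hasDerivAt_h (σ t : ℝ) :
    HasDerivAt (h σ) ((2 * exp (-t) * (2 + t ^ 2 / σ ^ 2)
      - 2 * (1 - exp (-t)) * (2 * t / σ ^ 2)) / (2 + t ^ 2 / σ ^ 2) ^ 2) t := by
  have hnum : HasDerivAt (fun t => 2 * (1 - exp (-t))) (2 * exp (-t)) t := by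
    simpa using (((hasDerivAt_neg t).exp).const_sub 1).const_mul 2
  have hden : HasDerivAt (fun t => 2 + t ^ 2 / σ ^ 2) (2 * t / σ ^ 2) t := by
    simpa using ((hasDerivAt_pow 2 t).div_const (σ ^ 2)).const_add 2
  exact hnum.div hden (by positivity)

lemma eq_of_deriv_h_eq_zero {σ t : ℝ} (hσ : σ ≠ 0) (hcrit : deriv (h σ) t = 0) :
    2 * t * (exp t - 1) - t ^ 2 = 2 * σ ^ 2 := by
  rw [(hasDerivAt_h σ t).deriv, div_eq_zero_iff, or_iff_left (by positivity)] at hcrit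
  have hexp : exp (-t) * exp t = 1 := by rw [← exp_add, neg_add_cancel, exp_zero]
  field_simp at hcrit
  linear_combination (-exp t / 2) * hcrit + (2 * σ ^ 2 + t ^ 2 + 2 * t) * hexp

lemma exp_sub_one_le_mul_exp (t : ℝ) : exp t - 1 ≤ t * exp t := by
  have hmul := mul_le_mul_of_nonneg_left (one_sub_le_exp_neg t) (exp_pos t).le
  rw [← exp_add, add_neg_cancel, exp_zero] at hmul
  linarith

lemma exp_one_half_lt : exp (1 / 2) < 1.7 := by
  have hsq : exp (1 / 2) ^ 2 = exp 1 := by rw [← exp_nat_mul]; norm_num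
  nlinarith [exp_one_lt_d9, exp_pos (1 / 2)]

lemma sq_le_two_mul_mul_exp_sub_one_sub_sq {t : ℝ} (ht : 0 ≤ t) :
    t ^ 2 ≤ 2 * t * (exp t - 1) - t ^ 2 := by
  nlinarith [mul_le_mul_of_nonneg_left (add_one_le_exp t) ht]

lemma two_mul_mul_exp_sub_one_sub_sq_le {t : ℝ} (ht : 0 ≤ t) (ht' : t ≤ 1 / 2) :
    2 * t * (exp t - 1) - t ^ 2 ≤ 2.4 * t ^ 2 := by
  have hexp : exp t ≤ 1.7 := (exp_le_exp.mpr ht').trans exp_one_half_lt.le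
  nlinarith [mul_le_mul_of_nonneg_left (exp_sub_one_le_mul_exp t) ht,
    mul_le_mul_of_nonneg_left hexp (sq_nonneg t)]

theorem critical_point_eq_and_bounds (σ tstar : ℝ) (hσ : 0 < σ)
    (hσ' : σ ≤ 1 / (2 * Real.sqrt 2)) (ht : 0 < tstar)
    (hcrit : deriv (h σ) tstar = 0) :
    tstar^2 * (2 * (Real.exp tstar - 1) / tstar - 1) = 2 * σ^2 ∧
      0.62 * (Real.sqrt 2 * σ) ≤ tstar ∧ tstar ≤ Real.sqrt 2 * σ := by
  have hcrit_eq := eq_of_deriv_h_eq_zero hσ.ne' hcrit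
  have hsqrt : √2 ^ 2 = 2 := sq_sqrt zero_le_two
  have hupper : tstar ≤ √2 * σ := by
    refine (pow_le_pow_iff_left₀ ht.le (by positivity) two_ne_zero).mp ?_
    rw [mul_pow, hsqrt]
    linarith [sq_le_two_mul_mul_exp_sub_one_sub_sq ht.le]
  have hhalf : tstar ≤ 1 / 2 := by
    calc tstar ≤ √2 * σ := hupper
      _ ≤ √2 * (1 / (2 * √2)) := by gcongr
      _ = 1 / 2 := by field_simp
  refine ⟨?_, ?_, hupper⟩
  · rw [← hcrit_eq]
    field_simp
  · refine (pow_le_pow_iff_left₀ (by positivity) ht.le two_ne_zero).mp ?_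
    rw [mul_pow, mul_pow, hsqrt]
    nlinarith [two_mul_mul_exp_sub_one_sub_sq_le ht.le hhalf]
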